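/- arXiv:2507.20615 — 3 statements merged into one kernel-verified Lean document; each statement's English description precedes it below -/
import Mathlib

section
/- The splits function is monotone in bandwidth: for any finite sequence of tasks 𝒯 and accumulators, if b₁ ≤ b₂ then splits over bound b₂ applied to 𝒯 (starting from the empty accumulator) is at most splits over bound b₁ applied to 𝒯. -/
/-- The `splits` function: greedily pack tasks into events of bandwidth `b`,
counting how many events are needed.  (When the accumulator is empty and a
single task exceeds the bandwidth, the original recursion does not terminate;
the guard `cur ≠ ∅` makes the function total and agrees with the original
definition whenever every task fits into the bandwidth.) -/
def splits {ID : Type*} [DecidableEq ID] (b : ℕ) :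
    List (Finset ID) → Finset ID → ℕ
  | [], _ => 1
  | τ :: T, cur =>
    if cur ≠ ∅ ∧ b < (cur ∪ τ).card then 1 + splits b (τ :: T) ∅
    else splits b T (cur ∪ τ)
termination_by L cur => (L.length, if cur = ∅ then 0 else 1)
decreasing_by
  · simp_all [Prod.lex_iff]
  · simp [Prod.lex_iff]

private lemma splits_nil' {ID : Type*} [DecidableEq ID] (b : ℕ) (cur : Finset ID) :
    splits b [] cur = 1 := by rw [splits]

private lemma splits_cons' {ID : Type*} [DecidableEq ID] (b : ℕ) (τ : Finset ID)
    (T : List (Finset ID)) (cur : Finset ID) :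
    splits b (τ :: T) cur =
      if cur ≠ ∅ ∧ b < (cur ∪ τ).card then 1 + splits b (τ :: T) ∅
      else splits b T (cur ∪ τ) := by rw [splits]

private lemma splits_empty_cons {ID : Type*} [DecidableEq ID] (b : ℕ) (τ : Finset ID)
    (T : List (Finset ID)) :
    splits b (τ :: T) ∅ = splits b T τ := by
  rw [splits_cons']; simp

private lemma splits_aux {ID : Type*} [DecidableEq ID] (L : List (Finset ID)) :
    (∀ b₁ b₂ (cur₁ cur₂ : Finset ID), b₁ ≤ b₂ → cur₂ ⊆ cur₁ →
        splits b₂ L cur₂ ≤ splits b₁ L cur₁) ∧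
    (∀ b (cur : Finset ID), splits b L cur ≤ 1 + splits b L ∅) := by
  induction L with
  | nil => constructor <;> intros <;> simp [splits_nil']
  | cons τ T ih =>
    obtain ⟨ih1, ih2⟩ := ih
    constructor
    · intro b₁ b₂ cur₁ cur₂ hb hsub
      rw [splits_cons' b₁, splits_cons' b₂, splits_empty_cons, splits_empty_cons]
      split_ifs with h2 h1 h1
      · exact Nat.add_le_add_left (ih1 _ _ _ _ hb (subset_refl _)) 1
      · exfalso
        apply h1
        obtain ⟨hne, hcard⟩ := h2
        refine ⟨fun hc => hne (Finset.subset_empty.mp (hc ▸ hsub)),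
          lt_of_le_of_lt hb (lt_of_lt_of_le hcard
            (Finset.card_le_card (Finset.union_subset_union_left hsub)))⟩
      · calc splits b₂ T (cur₂ ∪ τ) ≤ 1 + splits b₂ T ∅ := ih2 _ _
          _ ≤ 1 + splits b₁ T τ :=
            Nat.add_le_add_left (ih1 _ _ _ _ hb (Finset.empty_subset _)) 1
      · exact ih1 _ _ _ _ hb (Finset.union_subset_union_left hsub)
    · intro b cur
      rw [splits_cons', splits_empty_cons]
      split_ifs with h
      · exact le_rfl
      · calc splits b T (cur ∪ τ) ≤ 1 + splits b T ∅ := ih2 _ _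
          _ ≤ 1 + splits b T τ :=
            Nat.add_le_add_left (ih1 _ _ _ _ le_rfl (Finset.empty_subset _)) 1

/-- `splits` is antitone in the bandwidth bound. -/
theorem splits_mono_bandwidth {ID : Type*} [DecidableEq ID]
    (b₁ b₂ : ℕ) (hb : b₁ ≤ b₂) (L : List (Finset ID))
    (hL : ∀ τ ∈ L, τ.card ≤ b₁) :
    splits b₂ L ∅ ≤ splits b₁ L ∅ := by
  exact (splits_aux L).1 b₁ b₂ ∅ ∅ hb (subset_refl _)
end

section
/- If every task in a sequence has cardinality at most b, then the splits function with bound b terminates and its value on a list of tasks of length n is at most n + 1. -/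
lemma splits_le_aux {ID : Type*} [DecidableEq ID] (b : ℕ) :
    ∀ (L : List (Finset ID)) (cur : Finset ID), splits b L cur ≤ L.length + 1
  | [], cur => by simp [splits]
  | τ :: T, cur => by
    rw [splits]
    split
    · have h0 : splits b (τ :: T) (∅ : Finset ID) = splits b T τ := by
        rw [splits]; simp
      rw [h0]
      have := splits_le_aux b T τ
      simpa [List.length_cons, Nat.add_comm 1] using Nat.add_le_add_left this 1
    · have := splits_le_aux b T (cur ∪ τ)
      simp only [List.length_cons]
      omega

/-- If every task fits into the bandwidth, `splits` needs at most `n + 1`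
events for a list of `n` tasks. -/
theorem splits_le_length_succ {ID : Type*} [DecidableEq ID]
    (b : ℕ) (L : List (Finset ID)) (hL : ∀ τ ∈ L, τ.card ≤ b) :
    splits b L ∅ ≤ L.length + 1 := by
  exact splits_le_aux b L ∅
end

section
/- If all tasks in a list are pairwise disjoint subsets of ID and the sum of their cardinalities is at most b, then splits_b evaluated on the list with empty accumulator equals 1. -/
lemma splits_aux_s7 {ID : Type*} [DecidableEq ID]
    (b : ℕ) (L : List (Finset ID)) (cur : Finset ID)
    (hdisj : L.Pairwise fun τ₁ τ₂ => Disjoint τ₁ τ₂)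
    (hcd : ∀ τ ∈ L, Disjoint cur τ)
    (hsum : cur.card + (L.map Finset.card).sum ≤ b) :
    splits b L cur = 1 := by
  induction L generalizing cur with
  | nil => simp [splits]
  | cons τ T ih =>
    rw [List.pairwise_cons] at hdisj
    have hd : Disjoint cur τ := hcd τ (by simp)
    have hcard : (cur ∪ τ).card = cur.card + τ.card := Finset.card_union_of_disjoint hd
    simp only [List.map_cons, List.sum_cons] at hsum
    rw [splits]
    rw [if_neg]
    · exact ih (cur ∪ τ) hdisj.2 (fun σ hσ => Finset.disjoint_union_left.mpr
        ⟨hcd σ (by simp [hσ]), hdisj.1 σ hσ⟩) (by rw [hcard]; omega)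
    · rintro ⟨-, h⟩; rw [hcard] at h; omega

/-- Pairwise disjoint tasks whose total cardinality fits into the bandwidth
are packed into a single event. -/
theorem splits_eq_one_of_disjoint {ID : Type*} [DecidableEq ID]
    (b : ℕ) (L : List (Finset ID))
    (hdisj : L.Pairwise fun τ₁ τ₂ => Disjoint τ₁ τ₂)
    (hsum : (L.map Finset.card).sum ≤ b) :
    splits b L ∅ = 1 := by
  exact splits_aux_s7 b L ∅ hdisj (by simp) (by simpa)
end
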